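/- arXiv:2510.25670 — 4 statements merged into one kernel-verified Lean document; each statement's English description precedes it below -/
import Mathlib

section
/- Let A be an n×n real symmetric positive semidefinite matrix with 1 ≤ p < n and δ_p := λ_p − λ_{p+1} > 0, and let E be any n×n real symmetric matrix. Let Γ be the boundary of the rectangle [λ_p − δ_p/2, 2λ_1] × [−2λ_1, 2λ_1] in ℂ. Then ∮_Γ ‖(zI − A)⁻¹ E (zI − A)⁻¹‖ |dz| ≤ 4π‖E‖/δ_p. -/
open Matrix Real

/-- The spectral norm (operator norm induced by the Euclidean norm) of a real matrix. -/
noncomputable def specNormR {n : ℕ} (M : Matrix (Fin n) (Fin n) ℝ) : ℝ :=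
  ‖Matrix.toEuclideanCLM (𝕜 := ℝ) M‖

/-- The spectral norm (operator norm induced by the Euclidean norm) of a complex matrix. -/
noncomputable def specNormC {n : ℕ} (M : Matrix (Fin n) (Fin n) ℂ) : ℝ :=
  ‖Matrix.toEuclideanCLM (𝕜 := ℂ) M‖

/-- The resolvent `(zI − M)⁻¹` of a real matrix `M` regarded as a complex matrix. -/
noncomputable def resolv {n : ℕ} (M : Matrix (Fin n) (Fin n) ℝ) (z : ℂ) :
    Matrix (Fin n) (Fin n) ℂ :=
  (z • (1 : Matrix (Fin n) (Fin n) ℂ) - M.map (Complex.ofReal))⁻¹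

/-- `∮_Γ h(z) |dz|` over the boundary `Γ` of the rectangle `[x₀, x₁] × [−T, T]`:
the sum of the four arclength integrals over the sides. -/
noncomputable def rectInt (x₀ x₁ T : ℝ) (h : ℂ → ℝ) : ℝ :=
  (∫ t in (-T)..T, h ((x₀ : ℂ) + (t : ℂ) * Complex.I)) +
    (∫ t in (-T)..T, h ((x₁ : ℂ) + (t : ℂ) * Complex.I)) +
    (∫ x in x₀..x₁, h ((x : ℂ) + (T : ℂ) * Complex.I)) +
    (∫ x in x₀..x₁, h ((x : ℂ) - (T : ℂ) * Complex.I))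

/-!
Writing `A = Uᵀ diag(λ) U` with `U` orthogonal gives `‖(zI − A)⁻¹‖ = maxᵢ |z − λᵢ|⁻¹`, so the
integrand is at most `‖E‖ / d(z)²`, where `d(z)` is the distance from `z` to the spectrum.
Put `a = δ_p / 2` and `T = 2λ₁`. The left side of the rectangle lies in the middle of the gap
`(λ_{p+1}, λ_p)` and the right one at `2λ₁ ≥ λ₁ + a`, so on both vertical sides
`d(x + it)² ≥ a² + t²`, and each contributes at most `(2‖E‖ / a) arctan (T / a)`. On the
horizontal sides `d ≥ T`, and their length is at most `T`, so together they contribute at most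
`2‖E‖ / T`. Since `arctan (T / a) = π / 2 − arctan (a / T)` and `arctan y ≥ y / 2` on `[0, 1]`,
the total is at most `2π‖E‖ / a = 4π‖E‖ / δ_p`.
-/

open scoped Matrix.Norms.L2Operator

theorem EuclideanSpace.norm_sq_ofReal_add_mul_I {ι : Type*} [Fintype ι]
    (v w : EuclideanSpace ℝ ι) :
    ‖(WithLp.toLp 2 fun i => (v i : ℂ) + w i * Complex.I : EuclideanSpace ℂ ι)‖ ^ 2 =
      ‖v‖ ^ 2 + ‖w‖ ^ 2 := by
  simp [EuclideanSpace.norm_sq_eq, Complex.sq_norm, Complex.normSq_add_mul_I,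
    Finset.sum_add_distrib]

namespace Matrix

theorem PosSemidef.nonneg_of_mulVec_eq_smul {ι : Type*} [Fintype ι] {A : Matrix ι ι ℝ}
    (hA : A.PosSemidef) {v : ι → ℝ} {μ : ℝ} (hv : v ⬝ᵥ v = 1) (h : A *ᵥ v = μ • v) : 0 ≤ μ := by
  simpa [h, hv] using hA.dotProduct_mulVec_nonneg v

section CommRing

variable {ι R : Type*} [Fintype ι] [DecidableEq ι] [CommRing R]

theorem of_mul_transpose_of_orthonormal {u : ι → ι → R}
    (hu : ∀ i j, u i ⬝ᵥ u j = if i = j then 1 else 0) : of u * (of u)ᵀ = 1 := by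
  ext i j
  exact (hu i j).trans one_apply.symm

theorem eq_transpose_mul_diagonal_mul_of_eigenbasis {A : Matrix ι ι R} {lam : ι → R}
    {u : ι → ι → R} (hu : ∀ i j, u i ⬝ᵥ u j = if i = j then 1 else 0)
    (heig : ∀ i, A *ᵥ u i = lam i • u i) : A = (of u)ᵀ * diagonal lam * of u := by
  have hcol : A * (of u)ᵀ = (of u)ᵀ * diagonal lam := by
    ext i j
    rw [mul_diagonal]
    simpa [mul_apply, mulVec, dotProduct, mul_comm] using congrFun (heig j) i
  have hU : (of u)ᵀ * of u = 1 := mul_eq_one_comm.mp (of_mul_transpose_of_orthonormal hu)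
  rw [← hcol, Matrix.mul_assoc, hU, Matrix.mul_one]

theorem inv_star_mul_mul_of_mem_unitaryGroup [StarRing R] {U : Matrix ι ι R}
    (hU : U ∈ unitaryGroup ι R) (M : Matrix ι ι R) : (star U * M * U)⁻¹ = star U * M⁻¹ * U := by
  rw [mul_inv_rev, mul_inv_rev, inv_eq_left_inv (mem_unitaryGroup_iff'.mp hU),
    inv_eq_left_inv (mem_unitaryGroup_iff.mp hU), Matrix.mul_assoc]

end CommRing

variable {ι : Type*} [Fintype ι] [DecidableEq ι]

theorem inv_diagonal_of_ne_zero {K : Type*} [Field K] {v : ι → K} (hv : ∀ i, v i ≠ 0) :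
    (diagonal v)⁻¹ = diagonal fun i => (v i)⁻¹ :=
  inv_eq_left_inv <| by rw [diagonal_mul_diagonal]; simp [inv_mul_cancel₀ (hv _)]

theorem l2_opNorm_inv_smul_one_sub {𝕜 : Type*} [RCLike 𝕜] {A U : Matrix ι ι 𝕜}
    (hU : U ∈ unitaryGroup ι 𝕜) {lam : ι → 𝕜} (hA : A = star U * diagonal lam * U) {z : 𝕜}
    (hz : ∀ i, z ≠ lam i) : ‖(z • 1 - A)⁻¹‖ = ‖fun i => (z - lam i)⁻¹‖ := by
  have hconj : z • 1 - A = star U * diagonal (fun i => z - lam i) * U := by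
    rw [hA, show diagonal (fun i => z - lam i) = z • 1 - diagonal lam by
        rw [smul_one_eq_diagonal, diagonal_sub],
      Matrix.mul_sub, Matrix.sub_mul, Matrix.mul_smul, Matrix.mul_one, Matrix.smul_mul,
      mem_unitaryGroup_iff'.mp hU]
  rw [hconj, inv_star_mul_mul_of_mem_unitaryGroup hU,
    inv_diagonal_of_ne_zero fun i => sub_ne_zero.mpr (hz i),
    CStarRing.norm_mul_mem_unitary _ hU, CStarRing.norm_mem_unitary_mul _ (Unitary.star_mem hU),
    l2_opNorm_diagonal]

theorem exists_unitary_map_ofReal_eq_of_eigenbasis {A : Matrix ι ι ℝ} {lam : ι → ℝ}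
    {u : ι → ι → ℝ} (hu : ∀ i j, u i ⬝ᵥ u j = if i = j then 1 else 0)
    (heig : ∀ i, A *ᵥ u i = lam i • u i) :
    ∃ U ∈ unitaryGroup ι ℂ, A.map (↑) = star U * diagonal (fun i => (lam i : ℂ)) * U := by
  let f := Complex.ofRealHom.mapMatrix (m := ι)
  have hstar : star (f (of u)) = f (of u)ᵀ := by
    ext i j
    simp [f]
  refine ⟨f (of u), mem_unitaryGroup_iff.mpr ?_, ?_⟩
  · rw [hstar, ← map_mul, of_mul_transpose_of_orthonormal hu, map_one]
  · have hdiag : f (diagonal lam) = diagonal fun i => (lam i : ℂ) := diagonal_map (map_zero _)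
    rw [hstar, ← hdiag, ← map_mul, ← map_mul]
    exact congrArg f (eq_transpose_mul_diagonal_mul_of_eigenbasis hu heig)

theorem l2_opNorm_map_ofReal_le (M : Matrix ι ι ℝ) : ‖M.map ((↑) : ℝ → ℂ)‖ ≤ ‖M‖ := by
  rw [← l2_opNorm_toEuclideanCLM, ← l2_opNorm_toEuclideanCLM]
  refine ContinuousLinearMap.opNorm_le_bound _ (norm_nonneg _) fun x => ?_
  let re : EuclideanSpace ℝ ι := WithLp.toLp 2 fun i => (x i).re
  let im : EuclideanSpace ℝ ι := WithLp.toLp 2 fun i => (x i).im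
  have hx : x = WithLp.toLp 2 fun i => (re i : ℂ) + im i * Complex.I := by
    ext i
    simp [re, im, Complex.re_add_im]
  have hMx : toEuclideanCLM (𝕜 := ℂ) (M.map (↑)) x = WithLp.toLp 2 fun i =>
      (toEuclideanCLM (𝕜 := ℝ) M re i : ℂ) + toEuclideanCLM (𝕜 := ℝ) M im i * Complex.I := by
    ext i
    apply Complex.ext <;> simp [re, im, mulVec, dotProduct, Complex.re_sum, Complex.im_sum]
  have hbound (y : EuclideanSpace ℝ ι) :
      ‖toEuclideanCLM (𝕜 := ℝ) M y‖ ^ 2 ≤ ‖toEuclideanCLM (𝕜 := ℝ) M‖ ^ 2 * ‖y‖ ^ 2 := by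
    rw [← mul_pow]
    exact pow_le_pow_left₀ (norm_nonneg _) (ContinuousLinearMap.le_opNorm _ y) 2
  refine (sq_le_sq₀ (norm_nonneg _) (by positivity)).mp ?_
  rw [hMx, EuclideanSpace.norm_sq_ofReal_add_mul_I, mul_pow, hx,
    EuclideanSpace.norm_sq_ofReal_add_mul_I, mul_add]
  exact add_le_add (hbound re) (hbound im)

end Matrix

theorem Antitone.half_le_abs_sub_of_gap {ι : Type*} [Preorder ι] {lam : ι → ℝ}
    (hlam : Antitone lam) {j k : ι} (hjk : ∀ i, i ≤ j ∨ k ≤ i) {δ : ℝ}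
    (hδ : δ = lam j - lam k) (i : ι) : δ / 2 ≤ |lam j - δ / 2 - lam i| := by
  rcases hjk i with h | h
  · have := hlam h
    exact le_abs.mpr (.inr (by linarith))
  · have := hlam h
    exact le_abs.mpr (.inl (by linarith))

theorem Real.half_le_arctan {y : ℝ} (h₀ : 0 ≤ y) (h₁ : y ≤ 1) : y / 2 ≤ arctan y := by
  have hsqrt : √(1 + y ^ 2) ≤ 2 := Real.sqrt_le_iff.mpr ⟨zero_le_two, by nlinarith⟩
  calc y / 2 ≤ y / √(1 + y ^ 2) := by gcongr
    _ = sin (arctan y) := (sin_arctan y).symm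
    _ ≤ arctan y := sin_le (arctan_nonneg.mpr h₀)

theorem Real.arctan_div_le_pi_div_two_sub {a T : ℝ} (ha : 0 < a) (haT : a ≤ T) :
    arctan (T / a) ≤ π / 2 - a / (2 * T) := by
  have hT : 0 < T := ha.trans_le haT
  have h := half_le_arctan (div_nonneg ha.le hT.le) ((div_le_one hT).mpr haT)
  rw [← inv_div, arctan_inv_of_pos (div_pos ha hT)]
  rw [div_div, mul_comm] at h
  linarith

theorem integral_const_div_sq_add_sq_symm {a : ℝ} (ha : a ≠ 0) (K T : ℝ) :
    ∫ t in (-T)..T, K / (a ^ 2 + t ^ 2) = 2 * K / a * arctan (T / a) := by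
  simp_rw [div_eq_mul_inv K]
  rw [intervalIntegral.integral_const_mul, integral_inv_sq_add_sq ha, neg_div, arctan_neg]
  ring

-- A non-integrable `f` has integral `0`, so only `g` needs to be integrable.
theorem intervalIntegral.integral_mono_of_nonneg {f g : ℝ → ℝ} {a b : ℝ} (hab : a ≤ b)
    (hf : ∀ x, 0 ≤ f x) (hg : IntervalIntegrable g MeasureTheory.volume a b)
    (hfg : ∀ x, f x ≤ g x) : ∫ x in a..b, f x ≤ ∫ x in a..b, g x := by
  rw [integral_of_le hab, integral_of_le hab]
  exact MeasureTheory.integral_mono_of_nonneg (.of_forall hf) hg.1 (.of_forall hfg)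

theorem rectInt_le {f : ℂ → ℝ} {x₀ x₁ T a K : ℝ} (hf : ∀ z, 0 ≤ f z) (ha : 0 < a)
    (haT : a ≤ T) (hx : x₀ ≤ x₁) (hxT : x₁ - x₀ ≤ T) (hK : 0 ≤ K)
    (hleft : ∀ t : ℝ, f (x₀ + t * Complex.I) ≤ K / (a ^ 2 + t ^ 2))
    (hright : ∀ t : ℝ, f (x₁ + t * Complex.I) ≤ K / (a ^ 2 + t ^ 2))
    (htop : ∀ x : ℝ, f (x + T * Complex.I) ≤ K / T ^ 2)
    (hbot : ∀ x : ℝ, f (x - T * Complex.I) ≤ K / T ^ 2) :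
    rectInt x₀ x₁ T f ≤ 2 * π * K / a := by
  have hT : 0 < T := ha.trans_le haT
  have hcont : Continuous fun t : ℝ => K / (a ^ 2 + t ^ 2) :=
    continuous_const.div (by fun_prop) fun t => by positivity
  have hvert {x : ℝ} (hbound : ∀ t : ℝ, f (x + t * Complex.I) ≤ K / (a ^ 2 + t ^ 2)) :
      ∫ t in (-T)..T, f (x + t * Complex.I) ≤ 2 * K / a * arctan (T / a) := by
    rw [← integral_const_div_sq_add_sq_symm ha.ne']
    exact intervalIntegral.integral_mono_of_nonneg (by linarith) (fun _ => hf _)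
      (hcont.intervalIntegrable _ _) hbound
  have hhor {g : ℝ → ℂ} (hbound : ∀ x : ℝ, f (g x) ≤ K / T ^ 2) :
      ∫ x in x₀..x₁, f (g x) ≤ (x₁ - x₀) * (K / T ^ 2) := by
    rw [← smul_eq_mul, ← intervalIntegral.integral_const]
    exact intervalIntegral.integral_mono_of_nonneg hx (fun _ => hf _)
      intervalIntegrable_const hbound
  have harctan := Real.arctan_div_le_pi_div_two_sub ha haT
  calc rectInt x₀ x₁ T f
      ≤ 2 * (2 * K / a * arctan (T / a)) + 2 * ((x₁ - x₀) * (K / T ^ 2)) := by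
        unfold rectInt
        linarith [hvert hleft, hvert hright, hhor htop, hhor hbot]
    _ ≤ 2 * (2 * K / a * (π / 2 - a / (2 * T))) + 2 * (T * (K / T ^ 2)) := by gcongr
    _ = 2 * π * K / a := by field_simp; ring

theorem specNormC_eq_l2_opNorm {n : ℕ} (M : Matrix (Fin n) (Fin n) ℂ) : specNormC M = ‖M‖ := rfl

theorem specNormR_eq_l2_opNorm {n : ℕ} (M : Matrix (Fin n) (Fin n) ℝ) : specNormR M = ‖M‖ := rfl

section Resolvent

variable {n : ℕ} {A : Matrix (Fin n) (Fin n) ℝ} {lam : Fin n → ℝ} {u : Fin n → Fin n → ℝ}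

theorem norm_resolv_le (hu : ∀ i j, u i ⬝ᵥ u j = if i = j then 1 else 0)
    (heig : ∀ i, A *ᵥ u i = lam i • u i) {z : ℂ} {c : ℝ} (hc : 0 < c)
    (hz : ∀ i, c ≤ ‖z - lam i‖) : ‖resolv A z‖ ≤ c⁻¹ := by
  obtain ⟨U, hU, hAU⟩ := exists_unitary_map_ofReal_eq_of_eigenbasis hu heig
  have hne (i : Fin n) : z ≠ lam i := fun h => by simpa [h] using hc.trans_le (hz i)
  rw [resolv, l2_opNorm_inv_smul_one_sub hU hAU hne]
  refine (pi_norm_le_iff_of_nonneg (by positivity)).mpr fun i => ?_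
  rw [norm_inv]
  exact inv_anti₀ hc (hz i)

theorem specNormC_resolv_mul_mul_resolv_le (hu : ∀ i j, u i ⬝ᵥ u j = if i = j then 1 else 0)
    (heig : ∀ i, A *ᵥ u i = lam i • u i) (E : Matrix (Fin n) (Fin n) ℝ) {z : ℂ} {d : ℝ}
    (hd : 0 < d) (hz : ∀ i, d ≤ Complex.normSq (z - lam i)) :
    specNormC (resolv A z * E.map (↑) * resolv A z) ≤ specNormR E / d := by
  have hR : ‖resolv A z‖ ≤ (√d)⁻¹ :=
    norm_resolv_le hu heig (Real.sqrt_pos.mpr hd) fun i =>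
      (Real.sqrt_le_sqrt (hz i)).trans_eq (Complex.norm_def _).symm
  rw [specNormC_eq_l2_opNorm, specNormR_eq_l2_opNorm]
  calc ‖resolv A z * E.map (↑) * resolv A z‖
      ≤ ‖resolv A z‖ * ‖E.map ((↑) : ℝ → ℂ)‖ * ‖resolv A z‖ :=
        (Matrix.l2_opNorm_mul _ _).trans <| by gcongr; exact Matrix.l2_opNorm_mul _ _
    _ ≤ (√d)⁻¹ * ‖E‖ * (√d)⁻¹ := by gcongr; exact l2_opNorm_map_ofReal_le E
    _ = ‖E‖ / d := by
        rw [mul_right_comm, ← mul_inv, Real.mul_self_sqrt hd.le, div_eq_mul_inv, mul_comm]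

theorem specNormC_resolv_mul_mul_resolv_le_of_le_sq_add_sq
    (hu : ∀ i j, u i ⬝ᵥ u j = if i = j then 1 else 0) (heig : ∀ i, A *ᵥ u i = lam i • u i)
    (E : Matrix (Fin n) (Fin n) ℝ) {x y d : ℝ} (hd : 0 < d)
    (hxy : ∀ i, d ≤ (x - lam i) ^ 2 + y ^ 2) :
    specNormC (resolv A (x + y * Complex.I) * E.map (↑) * resolv A (x + y * Complex.I)) ≤
      specNormR E / d := by
  refine specNormC_resolv_mul_mul_resolv_le hu heig E hd fun i => ?_
  rw [show (x : ℂ) + y * Complex.I - lam i = ((x - lam i : ℝ) : ℂ) + y * Complex.I by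
      push_cast; ring, Complex.normSq_add_mul_I]
  exact hxy i

theorem specNormC_resolv_mul_mul_resolv_le_div_sq_add_sq
    (hu : ∀ i j, u i ⬝ᵥ u j = if i = j then 1 else 0) (heig : ∀ i, A *ᵥ u i = lam i • u i)
    (E : Matrix (Fin n) (Fin n) ℝ) {x a : ℝ} (ha : 0 < a) (hx : ∀ i, a ≤ |x - lam i|) (y : ℝ) :
    specNormC (resolv A (x + y * Complex.I) * E.map (↑) * resolv A (x + y * Complex.I)) ≤
      specNormR E / (a ^ 2 + y ^ 2) :=
  specNormC_resolv_mul_mul_resolv_le_of_le_sq_add_sq hu heig E (by positivity) fun i => by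
    rw [← sq_abs (x - lam i)]
    gcongr
    exact hx i

theorem specNormC_resolv_mul_mul_resolv_le_div_sq
    (hu : ∀ i j, u i ⬝ᵥ u j = if i = j then 1 else 0) (heig : ∀ i, A *ᵥ u i = lam i • u i)
    (E : Matrix (Fin n) (Fin n) ℝ) {y : ℝ} (hy : y ≠ 0) (x : ℝ) :
    specNormC (resolv A (x + y * Complex.I) * E.map (↑) * resolv A (x + y * Complex.I)) ≤
      specNormR E / y ^ 2 :=
  specNormC_resolv_mul_mul_resolv_le_of_le_sq_add_sq hu heig E (by positivity) fun i =>
    le_add_of_nonneg_left (sq_nonneg _)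

end Resolvent

/-- For `A` PSD with eigengap `δ_p > 0`, `E` symmetric, and `Γ` the
boundary of the rectangle `[λ_p − δ_p/2, 2λ₁] × [−2λ₁, 2λ₁]`,
`∮_Γ ‖(zI−A)⁻¹ E (zI−A)⁻¹‖ |dz| ≤ 4π‖E‖/δ_p`. -/
theorem stmt6 (n p : ℕ) (hpn : p < n)
    (A E : Matrix (Fin n) (Fin n) ℝ)
    (hA : A.PosSemidef)
    -- spectral data of `A`
    (lam : Fin n → ℝ) (u : Fin n → (Fin n → ℝ))
    (hlam : ∀ i j : Fin n, i ≤ j → lam j ≤ lam i)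
    (hu : ∀ i j : Fin n, u i ⬝ᵥ u j = if i = j then (1 : ℝ) else 0)
    (heig : ∀ i, A.mulVec (u i) = lam i • u i)
    -- the eigengap `δ_p`
    (δp : ℝ) (hδdef : δp = lam ⟨p - 1, by omega⟩ - lam ⟨p, hpn⟩)
    (hδpos : 0 < δp) :
    rectInt (lam ⟨p - 1, by omega⟩ - δp / 2) (2 * lam ⟨0, by omega⟩) (2 * lam ⟨0, by omega⟩)
        (fun z => specNormC (resolv A z * E.map (Complex.ofReal) * resolv A z)) ≤
      4 * π * specNormR E / δp := by
  have hanti : Antitone lam := fun i j h => hlam i j h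
  have hnonneg (i : Fin n) : 0 ≤ lam i :=
    hA.nonneg_of_mulVec_eq_smul (by simpa using hu i i) (heig i)
  have hδle : δp ≤ lam ⟨p - 1, by omega⟩ := by linarith [hnonneg ⟨p, hpn⟩]
  have hle0 : lam ⟨p - 1, by omega⟩ ≤ lam ⟨0, by omega⟩ := hanti (Nat.zero_le _)
  have hleft := hanti.half_le_abs_sub_of_gap (fun i => by simp only [Fin.le_def]; omega) hδdef
  have hright (i : Fin n) : δp / 2 ≤ |2 * lam ⟨0, by omega⟩ - lam i| := by
    have : lam i ≤ lam ⟨0, by omega⟩ := hanti (Nat.zero_le i.val)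
    exact le_abs.mpr (.inl (by linarith))
  have hT : 2 * lam ⟨0, by omega⟩ ≠ 0 := by linarith
  refine (rectInt_le (K := specNormR E) (fun _ => norm_nonneg _) (half_pos hδpos)
    (by linarith) (by linarith) (by linarith) (norm_nonneg _)
    (specNormC_resolv_mul_mul_resolv_le_div_sq_add_sq hu heig E (half_pos hδpos) hleft)
    (specNormC_resolv_mul_mul_resolv_le_div_sq_add_sq hu heig E (half_pos hδpos) hright)
    (specNormC_resolv_mul_mul_resolv_le_div_sq hu heig E hT) fun x => ?_).trans_eq ?_
  · have := specNormC_resolv_mul_mul_resolv_le_div_sq hu heig E (neg_ne_zero.mpr hT) x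
    rwa [neg_sq, Complex.ofReal_neg, neg_mul, ← sub_eq_add_neg] at this
  · rw [div_div_eq_mul_div]
    ring
end

section
/- Let A be an n×n real symmetric matrix with eigenvalues λ_1 ≥ ⋯ ≥ λ_n, let 1 ≤ k < n with δ_k := λ_k − λ_{k+1} > 0, assume λ_k + λ_{k+1} ≥ 0, set a_0 := λ_k − δ_k/2, and let T ≥ δ_k. Then ∫_{−T}^{T} √(a_0² + t²) / min_{1≤i≤n} ((a_0 − λ_i)² + t²) dt ≤ 2π a_0/δ_k + 4 log(3T/δ_k). -/
/-!
Because `a₀` is the midpoint of the gap `[λ_{k+1}, λ_k]`, every `(a₀ - λᵢ)²` is at least `c²`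
with `c = δ_k/2`, and `√(a₀² + t²) ≤ a₀ + |t|`, so the integrand is at most
`(a₀ + |t|) / (c² + t²)`. Its part `a₀ / (c² + t²)` integrates to an arctangent, bounded by
`π a₀ / c`; its part `|t| / (c² + t²)` integrates to `log (1 + (T/c)²)`, which is at most
`2 log (3T/δ_k)` as soon as `T ≥ δ_k`.
-/

open Real intervalIntegral MeasureTheory

lemma hasDerivAt_log_one_add_div_sq_div_two {c : ℝ} (hc : c ≠ 0) (t : ℝ) :
    HasDerivAt (fun t => log (1 + (t / c) ^ 2) / 2) (t / (c ^ 2 + t ^ 2)) t := by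
  have hpos : 0 < 1 + (t / c) ^ 2 := by positivity
  refine ((((hasDerivAt_id' t).div_const c).fun_pow 2).const_add 1).log hpos.ne' |>.div_const 2
    |>.congr_deriv ?_
  have : c ^ 2 + t ^ 2 ≠ 0 := by positivity
  norm_num
  field_simp

lemma integral_id_div_sq_add_sq {c : ℝ} (hc : c ≠ 0) (a b : ℝ) :
    ∫ t in a..b, t / (c ^ 2 + t ^ 2) = log (1 + (b / c) ^ 2) / 2 - log (1 + (a / c) ^ 2) / 2 :=
  integral_eq_sub_of_hasDerivAt (fun t _ => hasDerivAt_log_one_add_div_sq_div_two hc t)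
    (by
      refine (continuous_id.div (by fun_prop) fun t => ?_).intervalIntegrable a b
      positivity)

lemma integral_abs_div_sq_add_sq {c T : ℝ} (hc : c ≠ 0) (hT : 0 ≤ T) :
    ∫ t in -T..T, |t| / (c ^ 2 + t ^ 2) = log (1 + (T / c) ^ 2) := by
  set h : ℝ → ℝ := fun t => |t| / (c ^ 2 + t ^ 2)
  have hcont : Continuous h := continuous_abs.div (by fun_prop) fun t => by positivity
  have hright : ∫ t in (0 : ℝ)..T, h t = log (1 + (T / c) ^ 2) / 2 := by
    rw [integral_congr (g := fun t => t / (c ^ 2 + t ^ 2)), integral_id_div_sq_add_sq hc]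
    · simp
    · intro t ht
      rw [Set.uIcc_of_le hT] at ht
      simp [h, abs_of_nonneg ht.1]
  have hleft : ∫ t in -T..0, h t = ∫ t in (0 : ℝ)..T, h t := by
    simpa [h] using (integral_comp_neg (a := 0) (b := T) h).symm
  rw [← integral_add_adjacent_intervals (hcont.intervalIntegrable _ 0)
    (hcont.intervalIntegrable 0 _), hleft, hright]
  ring

lemma sqrt_sq_add_sq_le_add_abs {a : ℝ} (ha : 0 ≤ a) (t : ℝ) : √(a ^ 2 + t ^ 2) ≤ a + |t| :=
  sqrt_le_iff.2 ⟨by positivity, by nlinarith [sq_abs t, abs_nonneg t]⟩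

theorem integral_sqrt_sq_add_sq_div_le {a c T : ℝ} (ha : 0 ≤ a) (hc : 0 < c) (hT : 0 ≤ T)
    {D : ℝ → ℝ} (hD : ∀ t, c ^ 2 + t ^ 2 ≤ D t) :
    ∫ t in -T..T, √(a ^ 2 + t ^ 2) / D t ≤ π * a / c + log (1 + (T / c) ^ 2) := by
  have hpos (t : ℝ) : 0 < c ^ 2 + t ^ 2 := by positivity
  have hinv : Continuous fun t : ℝ => (c ^ 2 + t ^ 2)⁻¹ :=
    (by fun_prop : Continuous fun t : ℝ => c ^ 2 + t ^ 2).inv₀ fun t => (hpos t).ne'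
  have habs : Continuous fun t : ℝ => |t| / (c ^ 2 + t ^ 2) :=
    continuous_abs.div (by fun_prop) fun t => (hpos t).ne'
  set g : ℝ → ℝ := fun t => a * (c ^ 2 + t ^ 2)⁻¹ + |t| / (c ^ 2 + t ^ 2)
  have hg (t : ℝ) : √(a ^ 2 + t ^ 2) / D t ≤ g t :=
    calc √(a ^ 2 + t ^ 2) / D t ≤ (a + |t|) / (c ^ 2 + t ^ 2) :=
          div_le_div₀ (by positivity) (sqrt_sq_add_sq_le_add_abs ha t) (hpos t) (hD t)
      _ = g t := by simp only [g, div_eq_mul_inv, add_mul]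
  have hmono : ∫ t in -T..T, √(a ^ 2 + t ^ 2) / D t ≤ ∫ t in -T..T, g t := by
    rw [integral_of_le (by linarith), integral_of_le (by linarith)]
    exact integral_mono_of_nonneg (ae_of_all _ fun t => div_nonneg (sqrt_nonneg _)
      ((hpos t).le.trans (hD t))) ((continuous_const.mul hinv).add habs).integrableOn_Ioc
      (ae_of_all _ hg)
  have hintegral : ∫ t in -T..T, g t = a / c * (2 * arctan (T / c)) + log (1 + (T / c) ^ 2) := by
    rw [integral_add ((hinv.intervalIntegrable _ _).const_mul a)
      (habs.intervalIntegrable _ _), intervalIntegral.integral_const_mul,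
      integral_inv_sq_add_sq hc.ne', integral_abs_div_sq_add_sq hc.ne' hT, neg_div, arctan_neg]
    ring
  have harctan : a / c * (2 * arctan (T / c)) ≤ π * a / c := by
    calc a / c * (2 * arctan (T / c)) ≤ a / c * π := by
          gcongr
          linarith [arctan_lt_pi_div_two (T / c)]
      _ = π * a / c := by ring
  linarith

lemma le_abs_sub_of_consecutive {n : ℕ} {lam : Fin n → ℝ} (hlam : Antitone lam) {i j : Fin n}
    (hij : (i : ℕ) + 1 = j) {a c : ℝ} (hj : lam j + c ≤ a) (hi : a + c ≤ lam i) (l : Fin n) :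
    c ≤ |a - lam l| := by
  rcases le_or_gt l i with hli | hil
  · have := hlam hli
    exact le_abs.2 (Or.inr (by linarith))
  · have := hlam (show j ≤ l from Fin.le_def.2 (by omega))
    exact le_abs.2 (Or.inl (by linarith))

lemma log_one_add_two_mul_sq_le {x : ℝ} (hx : 1 ≤ x) : log (1 + (2 * x) ^ 2) ≤ 4 * log (3 * x) := by
  have hlog : 0 ≤ log (3 * x) := log_nonneg (by linarith)
  calc log (1 + (2 * x) ^ 2) ≤ log ((3 * x) ^ 2) := log_le_log (by positivity) (by nlinarith)
    _ = 2 * log (3 * x) := by rw [log_pow]; norm_num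
    _ ≤ 4 * log (3 * x) := by linarith

/-- Integral over the left vertical segment: with `a₀ = λ_k − δ_k/2`
the midpoint of `λ_k, λ_{k+1}` (so `a₀ ≥ 0` since `λ_k + λ_{k+1} ≥ 0`) and `T ≥ δ_k`,
`∫_{−T}^{T} √(a₀²+t²) / min_i ((a₀−λᵢ)²+t²) dt ≤ 2π a₀/δ_k + 4 log(3T/δ_k)`.
Here `lam ⟨i-1, _⟩` is the (1-based) eigenvalue `λ_i` of the symmetric matrix. -/
theorem stmt8 (n k : ℕ) (hk : 1 ≤ k) (hkn : k < n)
    (lam : Fin n → ℝ)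
    (hlam : ∀ i j : Fin n, i ≤ j → lam j ≤ lam i)
    (δk : ℝ) (hδdef : δk = lam ⟨k - 1, by omega⟩ - lam ⟨k, hkn⟩)
    (hδpos : 0 < δk)
    (hsum : 0 ≤ lam ⟨k - 1, by omega⟩ + lam ⟨k, hkn⟩)
    (a₀ : ℝ) (ha₀ : a₀ = lam ⟨k - 1, by omega⟩ - δk / 2)
    (T : ℝ) (hT : δk ≤ T) :
    (∫ t in (-T)..T,
        Real.sqrt (a₀ ^ 2 + t ^ 2) /
          Finset.univ.inf' ⟨⟨0, by omega⟩, Finset.mem_univ _⟩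
            (fun i : Fin n => (a₀ - lam i) ^ 2 + t ^ 2)) ≤
      2 * π * a₀ / δk + 4 * Real.log (3 * T / δk) := by
  have hc : 0 < δk / 2 := by positivity
  have hgap (i : Fin n) : δk / 2 ≤ |a₀ - lam i| :=
    le_abs_sub_of_consecutive (fun i j => hlam i j) (i := ⟨k - 1, by omega⟩)
      (j := ⟨k, hkn⟩) (Nat.sub_add_cancel hk) (by linarith) (by linarith) i
  have hmin (t : ℝ) : (δk / 2) ^ 2 + t ^ 2 ≤ Finset.univ.inf' ⟨⟨0, by omega⟩, Finset.mem_univ _⟩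
      (fun i : Fin n => (a₀ - lam i) ^ 2 + t ^ 2) :=
    Finset.le_inf' _ _ fun i _ =>
      add_le_add_left (sq_le_sq.2 ((abs_of_pos hc).trans_le (hgap i))) _
  calc _ ≤ π * a₀ / (δk / 2) + log (1 + (T / (δk / 2)) ^ 2) :=
        integral_sqrt_sq_add_sq_div_le (by linarith) hc (by linarith) hmin
    _ ≤ 2 * π * a₀ / δk + 4 * log (3 * T / δk) := by
        have := log_one_add_two_mul_sq_le ((one_le_div hδpos).2 hT)
        have hhalf : T / (δk / 2) = 2 * (T / δk) := by field_simp
        have hpi : π * a₀ / (δk / 2) = 2 * π * a₀ / δk := by field_simp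
        rw [hhalf, hpi, mul_div_assoc 3]
        linarith
end

section
/- Let A be an n×n real symmetric matrix with eigenvalues λ_1 ≥ ⋯ ≥ λ_n, and let a_1 > λ_1 with a_1 ≥ 0 and 0 < a_1 − λ_1 ≤ T. Then ∫_{−T}^{T} √(a_1² + t²) / min_{1≤i≤n} ((a_1 − λ_i)² + t²) dt ≤ π a_1/(a_1 − λ_1) + 4 log(3T/(a_1 − λ_1)). -/
/-!
Since `λ₁` is the eigenvalue closest to `a₁`, the minimum in the denominator is attained at `λ₁`,
so with `δ = a₁ - λ₁` the integrand is the even function `√(a₁² + t²) / (δ² + t²)`. On `[0, T]`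
it is at most `(a₁ + t) / (δ² + t²)`, whose integral is `(a₁/δ) arctan(T/δ) + ½ log(1 + (T/δ)²)`.
Then `arctan < π/2`, and `1 + x² ≤ (3x)⁴` for `x = T/δ ≥ 1`.
-/

open Real intervalIntegral

theorem Finset.inf'_sub_sq_add_eq {ι : Type*} {s : Finset ι} (hs : s.Nonempty) {lam : ι → ℝ}
    {i₀ : ι} (hi₀ : i₀ ∈ s) (hmax : ∀ i ∈ s, lam i ≤ lam i₀) {a : ℝ} (ha : lam i₀ ≤ a) (c : ℝ) :
    s.inf' hs (fun i => (a - lam i) ^ 2 + c) = (a - lam i₀) ^ 2 + c :=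
  le_antisymm (s.inf'_le _ hi₀) <| s.le_inf' hs _ fun i hi => by
    gcongr
    exact hmax i hi

theorem intervalIntegral.integral_neg_self_eq_two_mul_of_even {f : ℝ → ℝ} (hf : ∀ x, f (-x) = f x)
    {T : ℝ} (hint : IntervalIntegrable f MeasureTheory.volume 0 T) :
    ∫ x in -T..T, f x = 2 * ∫ x in 0..T, f x := by
  have hneg : ∫ x in -T..0, f x = ∫ x in 0..T, f x := by
    simpa [hf] using (integral_comp_neg (a := 0) (b := T) f).symm
  have hint' : IntervalIntegrable f MeasureTheory.volume (-T) 0 := by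
    simpa [hf] using (hint.comp_sub_left 0).symm
  rw [← integral_add_adjacent_intervals hint' hint, hneg, two_mul]

theorem integral_id_div_add_sq {c : ℝ} (hc : 0 < c) (a b : ℝ) :
    ∫ t in a..b, t / (c + t ^ 2) = (log (c + b ^ 2) - log (c + a ^ 2)) / 2 := by
  have hderiv : ∀ t ∈ Set.uIcc a b,
      HasDerivAt (fun t => log (c + t ^ 2) / 2) (t / (c + t ^ 2)) t := by
    intro t _
    have h := (((hasDerivAt_pow 2 t).const_add c).log (by positivity)).div_const 2
    exact h.congr_deriv (by ring)
  have hcont : Continuous fun t => t / (c + t ^ 2) := by fun_prop (disch := intro; positivity)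
  rw [integral_eq_sub_of_hasDerivAt hderiv (hcont.intervalIntegrable a b)]
  ring

theorem sqrt_sq_add_sq_le_add {a t : ℝ} (ha : 0 ≤ a) (ht : 0 ≤ t) : √(a ^ 2 + t ^ 2) ≤ a + t :=
  Real.sqrt_le_iff.mpr ⟨by positivity, by nlinarith⟩

theorem log_one_add_sq_le_four_mul_log {x : ℝ} (hx : 1 ≤ x) :
    log (1 + x ^ 2) ≤ 4 * log (3 * x) := by
  have hx2 : 1 ≤ x ^ 2 := one_le_pow₀ hx
  calc log (1 + x ^ 2) ≤ log ((3 * x) ^ 4) := log_le_log (by positivity) (by nlinarith)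
    _ = 4 * log (3 * x) := by rw [log_pow]; norm_num

theorem integral_sqrt_sq_add_sq_div_sq_add_sq_le {a δ T : ℝ} (ha : 0 ≤ a) (hδ : 0 < δ)
    (hT : 0 ≤ T) :
    ∫ t in -T..T, √(a ^ 2 + t ^ 2) / (δ ^ 2 + t ^ 2) ≤ π * a / δ + log (1 + (T / δ) ^ 2) := by
  have hden : ∀ t : ℝ, δ ^ 2 + t ^ 2 ≠ 0 := fun t => by positivity
  set g : ℝ → ℝ := fun t => a * (δ ^ 2 + t ^ 2)⁻¹ + t / (δ ^ 2 + t ^ 2)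
  have hf : Continuous fun t => √(a ^ 2 + t ^ 2) / (δ ^ 2 + t ^ 2) := by
    fun_prop (disch := exact hden)
  have hg₁ : Continuous fun t : ℝ => (δ ^ 2 + t ^ 2)⁻¹ := by fun_prop (disch := exact hden)
  have hg₂ : Continuous fun t : ℝ => t / (δ ^ 2 + t ^ 2) := by fun_prop (disch := exact hden)
  have hmajor : ∫ t in 0..T, √(a ^ 2 + t ^ 2) / (δ ^ 2 + t ^ 2) ≤ ∫ t in 0..T, g t := by
    refine integral_mono_on hT (hf.intervalIntegrable _ _)
      (((hg₁.intervalIntegrable _ _).const_mul a).add (hg₂.intervalIntegrable _ _)) fun t ht => ?_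
    calc √(a ^ 2 + t ^ 2) / (δ ^ 2 + t ^ 2) ≤ (a + t) / (δ ^ 2 + t ^ 2) := by
          gcongr; exact sqrt_sq_add_sq_le_add ha ht.1
      _ = g t := by ring
  have hg : ∫ t in 0..T, g t = a / δ * arctan (T / δ) + log (1 + (T / δ) ^ 2) / 2 := by
    rw [integral_add ((hg₁.intervalIntegrable _ _).const_mul a) (hg₂.intervalIntegrable _ _),
      integral_const_mul, integral_inv_sq_add_sq hδ.ne', integral_id_div_add_sq (by positivity),
      ← log_div (hden T) (hden 0)]
    field_simp
    simp
  have harctan : a / δ * arctan (T / δ) ≤ a / δ * (π / 2) := by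
    gcongr; exact (arctan_lt_pi_div_two _).le
  rw [integral_neg_self_eq_two_mul_of_even (by simp) (hf.intervalIntegrable _ _)]
  calc _ ≤ 2 * (a / δ * arctan (T / δ) + log (1 + (T / δ) ^ 2) / 2) := by linarith
    _ ≤ _ := by
      rw [show π * a / δ = 2 * (a / δ * (π / 2)) by ring]
      linarith

/-- Integral over the right vertical segment: if `a₁ > λ₁`, `a₁ ≥ 0`
and `0 < a₁ − λ₁ ≤ T`, then
`∫_{−T}^{T} √(a₁²+t²) / min_i ((a₁−λᵢ)²+t²) dt ≤ π a₁/(a₁−λ₁) + 4 log(3T/(a₁−λ₁))`.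
Here `lam ⟨0, _⟩` is the largest eigenvalue `λ₁` of the symmetric matrix. -/
theorem stmt9 (n : ℕ) (hn : 0 < n)
    (lam : Fin n → ℝ)
    (hlam : ∀ i j : Fin n, i ≤ j → lam j ≤ lam i)
    (a₁ T : ℝ)
    (ha₁ : lam ⟨0, hn⟩ < a₁) (ha₁0 : 0 ≤ a₁)
    (hT : a₁ - lam ⟨0, hn⟩ ≤ T) :
    (∫ t in (-T)..T,
        Real.sqrt (a₁ ^ 2 + t ^ 2) /
          Finset.univ.inf' ⟨⟨0, hn⟩, Finset.mem_univ _⟩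
            (fun i : Fin n => (a₁ - lam i) ^ 2 + t ^ 2)) ≤
      π * a₁ / (a₁ - lam ⟨0, hn⟩) + 4 * Real.log (3 * T / (a₁ - lam ⟨0, hn⟩)) := by
  have hinf (t : ℝ) := Finset.inf'_sub_sq_add_eq ⟨⟨0, hn⟩, Finset.mem_univ _⟩ (Finset.mem_univ _)
    (fun i _ => hlam _ i (Nat.zero_le i)) ha₁.le (t ^ 2)
  simp only [hinf]
  set δ := a₁ - lam ⟨0, hn⟩
  have hδ : 0 < δ := sub_pos.mpr ha₁
  calc _ ≤ π * a₁ / δ + log (1 + (T / δ) ^ 2) :=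
        integral_sqrt_sq_add_sq_div_sq_add_sq_le ha₁0 hδ (hδ.le.trans hT)
    _ ≤ _ := by
      rw [mul_div_assoc 3]
      gcongr
      exact log_one_add_sq_le_four_mul_log ((one_le_div hδ).mpr hT)
end

section
/- Let A, E be n×n real symmetric matrices, Ã := A + E, and let 1 ≤ k < p < n be such that the top-p singular values of A are exactly {λ_1, …, λ_k} ∪ {|λ_{n−(p−k)+1}|, …, |λ_n|}, with λ_k > 0 ≥ λ_{n−(p−k)+1}. If 2‖E‖ < σ_p − σ_{p+1}, then λ̃_k > |λ̃_{n−(p−k)}| and |λ̃_{n−(p−k)+1}| > λ̃_{k+1}; consequently the indices of the p eigenvalues of Ã of largest absolute value are exactly {1, …, k} ∪ {n−(p−k)+1, …, n}. -/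
open Matrix Real

/-!
The argument is Weyl's inequality `|λ̃ᵢ - λᵢ| ≤ ‖E‖`, proved by the Courant–Fischer dimension
count: the span of the top `i + 1` eigenvectors of `Ã` and the span of the bottom `n - i`
eigenvectors of `A` meet in some `x ≠ 0`, on which the Rayleigh quotient of `Ã` is at least `λ̃ᵢ`
while that of `A` is at most `λᵢ`, and the two quotients differ by at most `‖E‖`.
So every eigenvalue of `Ã` indexed inside `S` has absolute value at least `σₚ - ‖E‖`, every one
outside at most `σₚ₊₁ + ‖E‖`, and the gap condition separates the two groups; the sign
conditions keep `λ̃ₖ` positive and `λ̃_{n-(p-k)+1}` negative.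
-/

open Module Submodule Set
open scoped RealInnerProductSpace

theorem LinearIndependent.exists_ne_zero_mem_span_inf_span {K V κ κ' : Type*} [DivisionRing K]
    [AddCommGroup V] [Module K V] [FiniteDimensional K V] [Fintype κ] [Fintype κ']
    {v : κ → V} {w : κ' → V} (hv : LinearIndependent K v) (hw : LinearIndependent K w)
    (hcard : finrank K V < Fintype.card κ + Fintype.card κ') :
    ∃ x ∈ span K (range v), x ∈ span K (range w) ∧ x ≠ 0 := by
  by_contra! h
  have := finrank_add_finrank_le_of_disjoint (disjoint_def.mpr h)
  rw [finrank_span_eq_card hv, finrank_span_eq_card hw] at this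
  omega

section

variable {V : Type*} [NormedAddCommGroup V] [InnerProductSpace ℝ V]

namespace Orthonormal

variable {ι : Type*} [Fintype ι] {v : ι → V} {lam : ι → ℝ} {T : V →ₗ[ℝ] V}

theorem inner_sum_smul_map_sum_smul (hv : Orthonormal ℝ v) (hT : ∀ i, T (v i) = lam i • v i)
    (a : ι → ℝ) :
    ⟪∑ i, a i • v i, T (∑ i, a i • v i)⟫ = ∑ i, lam i * a i ^ 2 := by
  have hTa : T (∑ i, a i • v i) = ∑ i, (a i * lam i) • v i := by
    simp only [map_sum, map_smul, hT, smul_smul]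
  rw [hTa, hv.inner_sum]
  exact Finset.sum_congr rfl fun i _ => by simp only [conj_trivial]; ring

theorem norm_sum_smul_sq (hv : Orthonormal ℝ v) (a : ι → ℝ) :
    ‖∑ i, a i • v i‖ ^ 2 = ∑ i, a i ^ 2 := by
  rw [← real_inner_self_eq_norm_sq, hv.inner_sum]
  exact Finset.sum_congr rfl fun i _ => by simp only [conj_trivial]; ring

theorem le_inner_map_self_of_mem_span (hv : Orthonormal ℝ v) (hT : ∀ i, T (v i) = lam i • v i)
    {c : ℝ} (hc : ∀ i, c ≤ lam i) {x : V} (hx : x ∈ span ℝ (range v)) :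
    c * ‖x‖ ^ 2 ≤ ⟪x, T x⟫ := by
  obtain ⟨a, rfl⟩ := (mem_span_range_iff_exists_fun ℝ).mp hx
  rw [hv.inner_sum_smul_map_sum_smul hT, hv.norm_sum_smul_sq, Finset.mul_sum]
  gcongr with i
  exact hc i

theorem inner_map_self_le_of_mem_span (hv : Orthonormal ℝ v) (hT : ∀ i, T (v i) = lam i • v i)
    {c : ℝ} (hc : ∀ i, lam i ≤ c) {x : V} (hx : x ∈ span ℝ (range v)) :
    ⟪x, T x⟫ ≤ c * ‖x‖ ^ 2 := by
  obtain ⟨a, rfl⟩ := (mem_span_range_iff_exists_fun ℝ).mp hx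
  rw [hv.inner_sum_smul_map_sum_smul hT, hv.norm_sum_smul_sq, Finset.mul_sum]
  gcongr with i
  exact hc i

end Orthonormal

theorem abs_inner_map_self_le (P : V →L[ℝ] V) (x : V) :
    |⟪x, P x⟫| ≤ ‖P‖ * ‖x‖ ^ 2 :=
  calc |⟪x, P x⟫| ≤ ‖x‖ * ‖P x‖ := abs_real_inner_le_norm x (P x)
    _ ≤ ‖x‖ * (‖P‖ * ‖x‖) := by gcongr; exact P.le_opNorm x
    _ = ‖P‖ * ‖x‖ ^ 2 := by ring

variable [FiniteDimensional ℝ V] {n : ℕ} {v w : Fin n → V} {μ ν : Fin n → ℝ}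

theorem eigenvalue_le_add_of_inner_map_self_le (hV : finrank ℝ V = n) {S T : V →ₗ[ℝ] V}
    (hv : Orthonormal ℝ v) (hμ : Antitone μ) (hS : ∀ i, S (v i) = μ i • v i)
    (hw : Orthonormal ℝ w) (hν : Antitone ν) (hT : ∀ i, T (w i) = ν i • w i) {c : ℝ}
    (hST : ∀ x, ⟪x, T x⟫ ≤ ⟪x, S x⟫ + c * ‖x‖ ^ 2) (i : Fin n) :
    ν i ≤ μ i + c := by
  have hw' := hw.comp ((↑) : Finset.Iic i → Fin n) Subtype.val_injective
  have hv' := hv.comp ((↑) : Finset.Ici i → Fin n) Subtype.val_injective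
  obtain ⟨x, hxw, hxv, hx0⟩ :=
    hw'.linearIndependent.exists_ne_zero_mem_span_inf_span hv'.linearIndependent
      (by simp only [Fintype.card_coe, Fin.card_Iic, Fin.card_Ici]; omega)
  have hTx : ν i * ‖x‖ ^ 2 ≤ ⟪x, T x⟫ :=
    hw'.le_inner_map_self_of_mem_span (fun j => hT j) (fun j => hν (Finset.mem_Iic.mp j.2)) hxw
  have hSx : ⟪x, S x⟫ ≤ μ i * ‖x‖ ^ 2 :=
    hv'.inner_map_self_le_of_mem_span (fun j => hS j) (fun j => hμ (Finset.mem_Ici.mp j.2)) hxv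
  have hx : 0 < ‖x‖ ^ 2 := by positivity
  nlinarith [hST x]

theorem abs_sub_eigenvalue_le_opNorm (hV : finrank ℝ V = n) {S P : V →L[ℝ] V}
    (hv : Orthonormal ℝ v) (hμ : Antitone μ) (hS : ∀ i, S (v i) = μ i • v i)
    (hw : Orthonormal ℝ w) (hν : Antitone ν) (hT : ∀ i, (S + P) (w i) = ν i • w i)
    (i : Fin n) : |ν i - μ i| ≤ ‖P‖ := by
  have hP x : |⟪x, (S + P) x⟫ - ⟪x, S x⟫| ≤ ‖P‖ * ‖x‖ ^ 2 := by
    rw [_root_.add_apply, inner_add_right, add_sub_cancel_left]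
    exact abs_inner_map_self_le P x
  have hle := eigenvalue_le_add_of_inner_map_self_le hV (S := S.toLinearMap)
    (T := (S + P).toLinearMap) (c := ‖P‖) hv hμ hS hw hν hT
    (fun x => by simp only [ContinuousLinearMap.coe_coe]; linarith [(abs_le.mp (hP x)).2]) i
  have hge := eigenvalue_le_add_of_inner_map_self_le hV (S := (S + P).toLinearMap)
    (T := S.toLinearMap) (c := ‖P‖) hw hν hT hv hμ hS
    (fun x => by simp only [ContinuousLinearMap.coe_coe]; linarith [(abs_le.mp (hP x)).1]) i
  exact abs_le.mpr ⟨by linarith, by linarith⟩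

end

theorem orthonormal_toLp_of_dotProduct {m ι : Type*} [Fintype m] [DecidableEq ι]
    {u : ι → m → ℝ} (hu : ∀ i j, u i ⬝ᵥ u j = if i = j then 1 else 0) :
    Orthonormal ℝ (fun i => WithLp.toLp 2 (u i)) :=
  orthonormal_iff_ite.mpr fun i j => by simp [EuclideanSpace.inner_toLp_toLp, hu, eq_comm]

theorem abs_sub_eigenvalue_le_specNormR {n : ℕ} {A E : Matrix (Fin n) (Fin n) ℝ}
    {lam tlam : Fin n → ℝ} {u tu : Fin n → Fin n → ℝ} (hlam : Antitone lam)
    (hu : ∀ i j, u i ⬝ᵥ u j = if i = j then 1 else 0)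
    (heig : ∀ i, A *ᵥ u i = lam i • u i)
    (htlam : Antitone tlam) (htu : ∀ i j, tu i ⬝ᵥ tu j = if i = j then 1 else 0)
    (hteig : ∀ i, (A + E) *ᵥ tu i = tlam i • tu i) (i : Fin n) :
    |tlam i - lam i| ≤ specNormR E :=
  abs_sub_eigenvalue_le_opNorm finrank_euclideanSpace_fin (S := toEuclideanCLM (𝕜 := ℝ) A)
    (orthonormal_toLp_of_dotProduct hu) hlam
    (fun i => by rw [toEuclideanCLM_toLp, heig, WithLp.toLp_smul])
    (orthonormal_toLp_of_dotProduct htu) htlam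
    (fun i => by rw [← map_add, toEuclideanCLM_toLp, hteig, WithLp.toLp_smul]) i

theorem abs_lt_of_abs_sub_le_of_gap {a a' b b' ε σ₁ σ₂ : ℝ} (ha : |a' - a| ≤ ε)
    (hb : |b' - b| ≤ ε) (haσ : σ₁ ≤ a) (hbσ : |b| ≤ σ₂)
    (hgap : 2 * ε < σ₁ - σ₂) :
    |b'| < a' := by
  have := abs_sub_abs_le_abs_sub b' b
  linarith [(abs_le.mp ha).1]

/-- If `2‖E‖ < σ_p − σ_{p+1}` then `λ̃_k > |λ̃_{n−(p−k)}|` and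
`|λ̃_{n−(p−k)+1}| > λ̃_{k+1}`; consequently the indices of the `p` eigenvalues of `Ã`
of largest absolute value are exactly `S = {1,…,k} ∪ {n−(p−k)+1,…,n}`
(0-based: `{i | i < k ∨ n−(p−k) ≤ i}`). Indices are 1-based in the informal statement. -/
theorem stmt12 (n p k : ℕ) (hk : 1 ≤ k) (hkp : k < p) (hpn : p < n)
    (A E : Matrix (Fin n) (Fin n) ℝ)
    -- spectral data of `A`
    (lam : Fin n → ℝ) (u : Fin n → (Fin n → ℝ))
    (hlam : ∀ i j : Fin n, i ≤ j → lam j ≤ lam i)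
    (hu : ∀ i j : Fin n, u i ⬝ᵥ u j = if i = j then (1 : ℝ) else 0)
    (heig : ∀ i, A.mulVec (u i) = lam i • u i)
    -- spectral data of `Ã = A + E`
    (tlam : Fin n → ℝ) (tu : Fin n → (Fin n → ℝ))
    (htlam : ∀ i j : Fin n, i ≤ j → tlam j ≤ tlam i)
    (htu : ∀ i j : Fin n, tu i ⬝ᵥ tu j = if i = j then (1 : ℝ) else 0)
    (hteig : ∀ i, (A + E).mulVec (tu i) = tlam i • tu i)
    -- singular values of `A`: the `|λ_i|` sorted decreasingly, via a permutation `e`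
    (sigma : Fin n → ℝ) (e : Equiv.Perm (Fin n))
    (hsigma_mono : ∀ i j : Fin n, i ≤ j → sigma j ≤ sigma i)
    (hsigma : ∀ i, sigma i = |lam (e i)|)
    -- the top-`p` singular values of `A` are exactly those indexed by `S`
    (htop : ∀ i : Fin n, (i : ℕ) < p ↔ (((e i : Fin n) : ℕ) < k ∨ n - (p - k) ≤ ((e i : Fin n) : ℕ)))
    -- sign pattern: `λ_k > 0 ≥ λ_{n−(p−k)+1}`
    (hpos : 0 < lam ⟨k - 1, by omega⟩)
    (hneg : lam ⟨n - (p - k), by omega⟩ ≤ 0)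
    -- gap condition
    (hgapσ : 2 * specNormR E < sigma ⟨p - 1, by omega⟩ - sigma ⟨p, hpn⟩) :
    tlam ⟨k - 1, by omega⟩ > |tlam ⟨n - (p - k) - 1, by omega⟩| ∧
      |tlam ⟨n - (p - k), by omega⟩| > tlam ⟨k, by omega⟩ ∧
      ∀ i j : Fin n,
        ((i : ℕ) < k ∨ n - (p - k) ≤ (i : ℕ)) →
        ¬ ((j : ℕ) < k ∨ n - (p - k) ≤ (j : ℕ)) →
        |tlam j| < |tlam i| := by
  have hW := abs_sub_eigenvalue_le_specNormR hlam hu heig htlam htu hteig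
  have hin (i : Fin n) (hi : (i : ℕ) < k ∨ n - (p - k) ≤ (i : ℕ)) :
      sigma ⟨p - 1, by omega⟩ ≤ |lam i| := by
    have : (e.symm i : ℕ) < p := (htop _).2 (by simpa using hi)
    simpa [hsigma] using
      hsigma_mono (e.symm i) ⟨p - 1, by omega⟩ (Fin.le_def.mpr (by dsimp only; omega))
  have hout (j : Fin n) (hj : ¬ ((j : ℕ) < k ∨ n - (p - k) ≤ (j : ℕ))) :
      |lam j| ≤ sigma ⟨p, hpn⟩ := by
    have : ¬ (e.symm j : ℕ) < p := mt (htop _).1 (by simpa using hj)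
    simpa [hsigma] using
      hsigma_mono ⟨p, hpn⟩ (e.symm j) (Fin.le_def.mpr (by dsimp only; omega))
  refine ⟨?_, ?_, fun i j hi hj => ?_⟩
  · refine abs_lt_of_abs_sub_le_of_gap (hW _) (hW _) ?_ (hout _ (by dsimp only; omega)) hgapσ
    simpa [abs_of_pos hpos] using hin ⟨k - 1, by omega⟩ (by dsimp only; omega)
  · have := abs_lt_of_abs_sub_le_of_gap (a := -lam _) (a' := -tlam ⟨n - (p - k), by omega⟩)
      (by rw [neg_sub_neg, abs_sub_comm]; exact hW _) (hW ⟨k, by omega⟩) ?_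
      (hout _ (by dsimp only; omega)) hgapσ
    · exact (le_abs_self _).trans_lt (this.trans_le (neg_le_abs _))
    · simpa [abs_of_nonpos hneg] using hin ⟨n - (p - k), by omega⟩ (by simp)
  · exact abs_lt_of_abs_sub_le_of_gap ((abs_abs_sub_abs_le_abs_sub _ _).trans (hW i)) (hW j)
      (hin i hi) (hout j hj) hgapσ
end
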